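/- arXiv:2409.01852 — 6 statements merged into one kernel-verified Lean document; each statement's English description precedes it below -/
import Mathlib

section
/- For the Dabrowski indicatrix χ(π) = (3π − 1)/6, the function ζ(π) = (1+π)(χ(π) − π)χ′(π) + 2χ(π)(1 − χ(π)) equals −17/36 + π − (3/4)π², and ζ(π) < 0 for all π ∈ (0,1). -/
/-! The indicatrix is affine with slope 1/2, so ζ is an explicit quadratic,
`-17/36 + π - (3/4)π² = -(3/4)(π - 2/3)² - 5/36`, which is negative for every real π,
in particular on (0,1). -/

lemma deriv_affine_div (a b c x : ℝ) : deriv (fun y : ℝ => (a * y + b) / c) x = a / c :=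
  ((((hasDerivAt_id x).const_mul a).add_const b).div_const c).deriv.trans (by simp)

lemma dabrowski_quadratic_neg (π : ℝ) : -17/36 + π - (3/4) * π^2 < 0 := by
  nlinarith [sq_nonneg (π - 2/3)]

/-- For the Dabrowski indicatrix χ(π) = (3π−1)/6, the quantity
ζ(π) = (1+π)(χ−π)χ′ + 2χ(1−χ) equals −17/36 + π − (3/4)π² and is negative on (0,1). -/
theorem dabrowski_zeta (χ : ℝ → ℝ) (hχ : ∀ π : ℝ, χ π = (3 * π - 1) / 6) :
    (∀ π : ℝ, (1 + π) * (χ π - π) * deriv χ π + 2 * χ π * (1 - χ π)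
        = -17/36 + π - (3/4) * π^2) ∧
    (∀ π : ℝ, 0 < π → π < 1 →
        (1 + π) * (χ π - π) * deriv χ π + 2 * χ π * (1 - χ π) < 0) := by
  have hderiv (π : ℝ) : deriv χ π = 1 / 2 := by
    rw [show χ = fun y => (3 * y + -1) / 6 from funext fun y => by rw [hχ]; ring,
      deriv_affine_div]
    norm_num
  have hzeta (π : ℝ) : (1 + π) * (χ π - π) * deriv χ π + 2 * χ π * (1 - χ π)
      = -17/36 + π - (3/4) * π^2 := by
    rw [hderiv, hχ]
    ring
  exact ⟨hzeta, fun π _ _ => hzeta π ▸ dabrowski_quadratic_neg π⟩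
end

section
/- For the Dabrowski indicatrix χ(π) = (3π − 1)/6, the function ξ(π) = (2π+1)χ(π) − π equals −1/6 − (5/6)π + π², and ξ(π) < 0 for all π ∈ (0,1). Hence the Dabrowski solution violates the compressibility condition H₂ᴳ throughout the energy-condition domain. -/
/-- For the Dabrowski indicatrix χ(π) = (3π−1)/6, ξ(π) = (2π+1)χ(π) − π equals
−1/6 − (5/6)π + π² and is negative on (0,1): the compressibility condition H₂ᴳ fails. -/
theorem dabrowski_xi (χ : ℝ → ℝ) (hχ : ∀ π : ℝ, χ π = (3 * π - 1) / 6) :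
    (∀ π : ℝ, (2 * π + 1) * χ π - π = -1/6 - (5/6) * π + π^2) ∧
    (∀ π : ℝ, 0 < π → π < 1 → (2 * π + 1) * χ π - π < 0) := by
  have hξ (π : ℝ) : (2 * π + 1) * χ π - π = -1/6 - (5/6) * π + π^2 := by
    rw [hχ]; ring
  refine ⟨hξ, fun π h0 h1 => ?_⟩
  have hfactor : -1/6 - (5/6) * π + π^2 = (π - 1) * (π + 1/6) := by ring
  rw [hξ, hfactor]
  exact mul_neg_of_neg_of_pos (by linarith) (by linarith)
end

section
/- Let χ(π) = γπ + γ − 2/3 and ζ(π) = (1+π)(χ(π) − π)χ′(π) + 2χ(π)(1−χ(π)). Then ζ(π) = −γ(γ+1)π² + γ(3 − 2γ)π − γ(γ − 4) − 20/9, and if 2/3 < γ < 5/6 then ζ(π) > 0 for all π ∈ (0,1). -/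
lemma deriv_eq_of_forall_eq_mul_add {f : ℝ → ℝ} {a b : ℝ} (hf : ∀ x, f x = a * x + b) (x : ℝ) :
    deriv f x = a := by
  rw [funext hf]
  simp

/-- A concave quadratic lies above the chord joining its values at `0` and `1`. -/
lemma quadratic_pos_of_pos_at_zero_one {a b c x : ℝ} (ha : a ≤ 0) (h0 : 0 < c)
    (h1 : 0 < a + b + c) (hx0 : 0 ≤ x) (hx1 : x ≤ 1) : 0 < a * x ^ 2 + b * x + c := by
  have hchord : a * x ^ 2 + b * x + c = (1 - x) * c + x * (a + b + c) - a * x * (1 - x) := by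
    ring
  have hsag : 0 ≤ -a * x * (1 - x) :=
    mul_nonneg (mul_nonneg (neg_nonneg.mpr ha) hx0) (sub_nonneg.mpr hx1)
  have hchord_pos : 0 < (1 - x) * c + x * (a + b + c) := by
    rcases hx0.eq_or_lt with rfl | hx
    · simpa using h0
    · nlinarith [mul_nonneg (sub_nonneg.mpr hx1) h0.le, mul_pos hx h1]
  linarith

/-- For χ(π) = γπ + γ − 2/3, ζ(π) = (1+π)(χ−π)χ′ + 2χ(1−χ) equals
−γ(γ+1)π² + γ(3 − 2γ)π − γ(γ − 4) − 20/9, and is positive on (0,1) when 2/3 < γ < 5/6. -/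
theorem ideal_radiation_zeta (γ : ℝ) (χ : ℝ → ℝ)
    (hχ : ∀ π : ℝ, χ π = γ * π + γ - 2/3) :
    (∀ π : ℝ, (1 + π) * (χ π - π) * deriv χ π + 2 * χ π * (1 - χ π)
        = -γ * (γ + 1) * π^2 + γ * (3 - 2*γ) * π - γ * (γ - 4) - 20/9) ∧
    (2/3 < γ → γ < 5/6 → ∀ π : ℝ, 0 < π → π < 1 →
        0 < (1 + π) * (χ π - π) * deriv χ π + 2 * χ π * (1 - χ π)) := by
  have hχ' : ∀ π : ℝ, χ π = γ * π + (γ - 2/3) := fun π => by rw [hχ]; ring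
  have hzeta : ∀ π : ℝ, (1 + π) * (χ π - π) * deriv χ π + 2 * χ π * (1 - χ π)
      = -γ * (γ + 1) * π^2 + γ * (3 - 2*γ) * π - γ * (γ - 4) - 20/9 := fun π => by
    rw [deriv_eq_of_forall_eq_mul_add hχ' π, hχ π]
    ring
  refine ⟨hzeta, fun hlo hhi π hπ0 hπ1 => ?_⟩
  -- ζ(0) = (γ - 2/3)(10/3 - γ) and ζ(1) = 4 (γ - 2/3)(5/6 - γ)
  have hζ0 : 0 < -γ * (γ - 4) - 20/9 := by
    nlinarith [mul_pos (sub_pos.mpr hlo) (by linarith : (0:ℝ) < 10/3 - γ)]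
  have hζ1 : 0 < -γ * (γ + 1) + γ * (3 - 2*γ) + (-γ * (γ - 4) - 20/9) := by
    nlinarith [mul_pos (sub_pos.mpr hlo) (sub_pos.mpr hhi)]
  have hlead : -γ * (γ + 1) ≤ 0 := by nlinarith
  rw [hzeta π]
  linarith [quadratic_pos_of_pos_at_zero_one hlead hζ0 hζ1 hπ0.le hπ1.le]
end

section
/- Let χ(π) = γπ + γ − 2/3 and ξ(π) = (2π+1)χ(π) − π = 2γπ² + (3γ − 7/3)π + γ − 2/3. If γ > (13 − 2√30)/3 then ξ(π) > 0 for all π ∈ (0,1). -/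
/-! Writing ξ(π) = γ (2π+1)(π+1) − (7π+2)/3, it suffices that 3γ exceeds
(7π+2)/((2π+1)(π+1)) for π > 0. For a = 13 − 2√30, the smaller root of a² − 26a + 49 = 0,
the quadratic a (2π+1)(π+1) − (7π+2) has zero discriminant, so it is a nonnegative square
and a bounds that ratio. -/

lemma xi_eq_factored (γ x : ℝ) :
    (2 * x + 1) * (γ * x + γ - 2/3) - x = γ * ((2 * x + 1) * (x + 1)) - (7 * x + 2) / 3 := by
  ring

lemma seven_mul_add_two_le_mul_of_discrim_eq_zero {a : ℝ} (ha : 0 < a)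
    (hdisc : a ^ 2 - 26 * a + 49 = 0) (x : ℝ) :
    7 * x + 2 ≤ a * ((2 * x + 1) * (x + 1)) := by
  have hsq : 8 * a * (a * ((2 * x + 1) * (x + 1)) - (7 * x + 2)) = (4 * a * x + 3 * a - 7) ^ 2 := by
    linear_combination (-1 : ℝ) * hdisc
  have hnonneg : 0 ≤ 8 * a * (a * ((2 * x + 1) * (x + 1)) - (7 * x + 2)) :=
    hsq ▸ sq_nonneg _
  exact sub_nonneg.mp (nonneg_of_mul_nonneg_right hnonneg (by positivity))

lemma thirteen_sub_two_mul_sqrt_thirty_pos : 0 < 13 - 2 * √30 := by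
  have : √30 < 13 / 2 := by
    rw [Real.sqrt_lt' (by norm_num)]
    norm_num
  linarith

lemma thirteen_sub_two_mul_sqrt_thirty_sq_sub_mul_add_eq_zero :
    (13 - 2 * √30) ^ 2 - 26 * (13 - 2 * √30) + 49 = 0 := by
  linear_combination (4 : ℝ) * Real.sq_sqrt (show (0 : ℝ) ≤ 30 by norm_num)

/-- For χ(π) = γπ + γ − 2/3, ξ(π) = (2π+1)χ(π) − π = 2γπ² + (3γ − 7/3)π + γ − 2/3,
and if γ > (13 − 2√30)/3 then ξ > 0 on (0,1). -/
theorem ideal_radiation_xi (γ : ℝ) (χ : ℝ → ℝ)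
    (hχ : ∀ π : ℝ, χ π = γ * π + γ - 2/3) :
    (∀ π : ℝ, (2 * π + 1) * χ π - π = 2*γ*π^2 + (3*γ - 7/3) * π + γ - 2/3) ∧
    ((13 - 2 * Real.sqrt 30) / 3 < γ → ∀ π : ℝ, 0 < π → π < 1 →
        0 < (2 * π + 1) * χ π - π) := by
  refine ⟨fun π => by rw [hχ]; ring, fun hγ π hπ _ => ?_⟩
  rw [hχ, xi_eq_factored]
  have hbound := seven_mul_add_two_le_mul_of_discrim_eq_zero
    thirteen_sub_two_mul_sqrt_thirty_pos thirteen_sub_two_mul_sqrt_thirty_sq_sub_mul_add_eq_zero π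
  have hpos : 0 < (2 * π + 1) * (π + 1) := by positivity
  have hγP := mul_lt_mul_of_pos_right hγ hpos
  linarith
end

section
/- Let γ_ξ = (13 − 2√30)/3. For every γ with γ_ξ < γ < 5/6, the indicatrix function χ(π) = γπ + γ − 2/3 satisfies all of the conditions: 0 < χ(π) < 1, ζ(π) > 0, and ξ(π) > 0, for all π ∈ (0,1). -/
/-!
With `χ(π) = γπ + γ - 2/3` all three quantities are polynomials in `π` of degree at most two.
`χ` is increasing, so `0 < χ < 1` on `(0, 1)` amounts to `χ(0) = γ - 2/3 ≥ 0` and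
`χ(1) = 2γ - 2/3 ≤ 1`, i.e. `2/3 ≤ γ ≤ 5/6`; note `2/3 < γ_ξ` since `(2√30)² = 120 < 121`.
`ξ` is a quadratic with leading coefficient `2γ > 0` whose discriminant vanishes exactly at
`γ = (13 ± 2√30)/3`, so it is negative between these roots and `ξ > 0` for every `π`.
`ζ` is a concave quadratic in `π`, positive at `π = 0` and `π = 1`, hence positive in between.
-/

theorem quadratic_pos_of_discrim_neg {K : Type*} [Field K] [LinearOrder K] [IsStrictOrderedRing K]
    {a b c : K} (ha : 0 < a) (h : discrim a b c < 0) (x : K) :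
    0 < a * (x * x) + b * x + c := by
  have hscaled : 4 * a * (a * (x * x) + b * x + c) = (2 * a * x + b) ^ 2 - discrim a b c := by
    rw [discrim]; ring
  have : 0 < 4 * a * (a * (x * x) + b * x + c) := by
    rw [hscaled]; nlinarith [sq_nonneg (2 * a * x + b)]
  exact pos_of_mul_pos_right this (by positivity)

theorem two_thirds_lt_thirteen_sub_two_sqrt_thirty_div_three :
    (2 / 3 : ℝ) < (13 - 2 * Real.sqrt 30) / 3 := by
  have : Real.sqrt 30 < 11 / 2 := (Real.sqrt_lt' (by norm_num)).2 (by norm_num)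
  linarith

theorem affine_indicatrix_xi_discrim_eq (γ : ℝ) :
    discrim (2 * γ) (3 * γ - 7 / 3) (γ - 2 / 3) =
      (γ - (13 - 2 * Real.sqrt 30) / 3) * (γ - (13 + 2 * Real.sqrt 30) / 3) := by
  have h30 : Real.sqrt 30 ^ 2 = 30 := Real.sq_sqrt (by norm_num)
  rw [discrim]
  linear_combination (4 / 9 : ℝ) * h30

section IdealGas

variable {γ : ℝ}

theorem affine_indicatrix_mem_Ioo (hγ1 : 2 / 3 ≤ γ) (hγ2 : γ ≤ 5 / 6) {π : ℝ}
    (hπ0 : 0 < π) (hπ1 : π < 1) :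
    0 < γ * π + γ - 2 / 3 ∧ γ * π + γ - 2 / 3 < 1 := by
  constructor <;> nlinarith

/-- `ζ` splits as its chord through `ζ(0)`, `ζ(1)` plus the nonnegative bump `γ(γ + 1)π(1 - π)`. -/
theorem affine_indicatrix_zeta_pos (hγ1 : 2 / 3 < γ) (hγ2 : γ < 5 / 6) {π : ℝ}
    (hπ0 : 0 < π) (hπ1 : π < 1) :
    0 < (1 + π) * (γ * π + γ - 2 / 3 - π) * γ +
      2 * (γ * π + γ - 2 / 3) * (1 - (γ * π + γ - 2 / 3)) := by
  have hsplit : (1 + π) * (γ * π + γ - 2 / 3 - π) * γ +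
      2 * (γ * π + γ - 2 / 3) * (1 - (γ * π + γ - 2 / 3)) =
      (1 - π) * ((γ - 2 / 3) * (10 / 3 - γ)) + π * (4 * (5 / 6 - γ) * (γ - 2 / 3)) +
        γ * (γ + 1) * (π * (1 - π)) := by
    ring
  have hζ0 : 0 < (γ - 2 / 3) * (10 / 3 - γ) := mul_pos (by linarith) (by linarith)
  have hζ1 : 0 < 4 * (5 / 6 - γ) * (γ - 2 / 3) := by
    have := mul_pos (sub_pos.2 hγ2) (sub_pos.2 hγ1)
    linarith
  rw [hsplit]
  have : 0 ≤ γ * (γ + 1) * (π * (1 - π)) :=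
    mul_nonneg (by nlinarith) (mul_nonneg hπ0.le (by linarith))
  linarith [mul_pos (sub_pos.2 hπ1) hζ0, mul_pos hπ0 hζ1]

theorem affine_indicatrix_xi_pos (hγ1 : (13 - 2 * Real.sqrt 30) / 3 < γ) (hγ2 : γ < 5 / 6)
    (π : ℝ) :
    0 < (2 * π + 1) * (γ * π + γ - 2 / 3) - π := by
  have hγ : 0 < 2 * γ := by
    linarith [two_thirds_lt_thirteen_sub_two_sqrt_thirty_div_three]
  have hdiscrim : discrim (2 * γ) (3 * γ - 7 / 3) (γ - 2 / 3) < 0 := by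
    rw [affine_indicatrix_xi_discrim_eq]
    exact mul_neg_of_pos_of_neg (by linarith) (by linarith [Real.sqrt_nonneg 30])
  have := quadratic_pos_of_discrim_neg hγ hdiscrim π
  linarith

end IdealGas

/-- For γ_ξ = (13 − 2√30)/3 < γ < 5/6 and χ(π) = γπ + γ − 2/3, all the compressibility
conditions 0 < χ < 1, ζ > 0, ξ > 0 hold for every π ∈ (0,1). -/
theorem ideal_radiation_all_compressibility (γ : ℝ) (χ : ℝ → ℝ)
    (hχ : ∀ π : ℝ, χ π = γ * π + γ - 2/3)
    (hγ1 : (13 - 2 * Real.sqrt 30) / 3 < γ) (hγ2 : γ < 5/6) :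
    ∀ π : ℝ, 0 < π → π < 1 →
      (0 < χ π ∧ χ π < 1) ∧
      0 < (1 + π) * (χ π - π) * deriv χ π + 2 * χ π * (1 - χ π) ∧
      0 < (2 * π + 1) * χ π - π := by
  intro π hπ0 hπ1
  have hderiv : deriv χ π = γ := by
    rw [funext hχ]
    simp
  have hγ : 2 / 3 < γ := two_thirds_lt_thirteen_sub_two_sqrt_thirty_div_three.trans hγ1
  rw [hderiv, hχ π]
  exact ⟨affine_indicatrix_mem_Ioo hγ.le hγ2.le hπ0 hπ1,
    affine_indicatrix_zeta_pos hγ hγ2 hπ0 hπ1, affine_indicatrix_xi_pos hγ1 hγ2 π⟩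
end

section
/- Let χ(ρ,p) = π + 1/3 + (1/3)(π+1)[(π+1)c₁ + c₂] with constants c₁, c₂ and π = p/ρ. If χ, viewed as a function of (ρ,p), satisfies χ(ρ,0) = 0, ∂_p χ(ρ,0) = γ/ρ and ∂_ρ χ(ρ,0) = 0 for all ρ > 0 (first-order matching with a classical ideal gas of adiabatic index γ), then χ(π) = γπ + (γ − 2/3)π². -/
/-! The matching conditions on the value and the p-slope, read at ρ = 1, are linear
equations in (c₁, c₂): the value at π = 0 gives c₁ + c₂ = -1 and the slope at π = 0 gives
1 + (2c₁ + c₂)/3 = γ. Hence c₁ = 3γ - 2, c₂ = 1 - 3γ, and substituting into the quadratic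
polynomial χ(π) gives the claim. -/

/-- The indicatrix as a function of `π = p / ρ`. -/
noncomputable def stephaniIndicatrix (c₁ c₂ π : ℝ) : ℝ :=
  π + 1/3 + (1/3) * (π + 1) * ((π + 1) * c₁ + c₂)

namespace stephaniIndicatrix

theorem apply_zero (c₁ c₂ : ℝ) : stephaniIndicatrix c₁ c₂ 0 = (1 + c₁ + c₂) / 3 := by
  unfold stephaniIndicatrix
  ring

theorem hasDerivAt (c₁ c₂ π : ℝ) :
    HasDerivAt (stephaniIndicatrix c₁ c₂) (1 + (2 * (π + 1) * c₁ + c₂) / 3) π := by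
  have hπ : HasDerivAt (fun x : ℝ => x + 1) 1 π := (hasDerivAt_id' π).add_const 1
  exact (((hasDerivAt_id' π).add_const (1/3 : ℝ)).add
    ((hπ.const_mul (1/3 : ℝ)).mul ((hπ.mul_const c₁).add_const c₂))).congr_deriv (by ring)

theorem eq_of_coeffs {c₁ c₂ γ : ℝ} (hval : c₁ + c₂ = -1) (hslope : 1 + (2 * c₁ + c₂) / 3 = γ)
    (π : ℝ) : stephaniIndicatrix c₁ c₂ π = γ * π + (γ - 2/3) * π ^ 2 := by
  obtain rfl : c₁ = 3 * γ - 2 := by linarith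
  obtain rfl : c₂ = 1 - 3 * γ := by linarith
  unfold stephaniIndicatrix
  ring

end stephaniIndicatrix

theorem stephani_first_order_low_general (c₁ c₂ γ : ℝ) (χ : ℝ → ℝ → ℝ)
    (hχ : ∀ ρ p : ℝ, χ ρ p = p/ρ + 1/3 + (1/3) * (p/ρ + 1) * ((p/ρ + 1) * c₁ + c₂))
    (h0 : ∀ ρ : ℝ, 0 < ρ → χ ρ 0 = 0)
    (hp : ∀ ρ : ℝ, 0 < ρ → deriv (fun p => χ ρ p) 0 = γ / ρ) :
    ∀ ρ p : ℝ, 0 < ρ → χ ρ p = γ * (p/ρ) + (γ - 2/3) * (p/ρ)^2 := by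
  have hχπ : ∀ ρ p, χ ρ p = stephaniIndicatrix c₁ c₂ (p / ρ) := hχ
  have hχ₁ : (fun p => χ 1 p) = stephaniIndicatrix c₁ c₂ := by
    funext p
    rw [hχπ, div_one]
  have hval : c₁ + c₂ = -1 := by
    have h := h0 1 one_pos
    rw [hχπ, zero_div, stephaniIndicatrix.apply_zero] at h
    linarith
  have hslope : 1 + (2 * c₁ + c₂) / 3 = γ := by
    have h := hp 1 one_pos
    rw [hχ₁, (stephaniIndicatrix.hasDerivAt c₁ c₂ 0).deriv, div_one] at h
    simpa using h
  intro ρ p _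
  rw [hχπ, stephaniIndicatrix.eq_of_coeffs hval hslope]

/-- If the ideal gas Stephani indicatrix χ(ρ,p) = π + 1/3 + (1/3)(π+1)[(π+1)c₁ + c₂]
(π = p/ρ) matches a classical ideal gas of adiabatic index γ up to first order at p = 0,
then χ(π) = γπ + (γ − 2/3)π². -/
theorem stephani_first_order_low (c₁ c₂ γ : ℝ) (χ : ℝ → ℝ → ℝ)
    (hχ : ∀ ρ p : ℝ, χ ρ p = p/ρ + 1/3 + (1/3) * (p/ρ + 1) * ((p/ρ + 1) * c₁ + c₂))
    (h0 : ∀ ρ : ℝ, 0 < ρ → χ ρ 0 = 0)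
    (hp : ∀ ρ : ℝ, 0 < ρ → deriv (fun p => χ ρ p) 0 = γ / ρ)
    (hρ : ∀ ρ : ℝ, 0 < ρ → deriv (fun r => χ r 0) ρ = 0) :
    ∀ ρ p : ℝ, 0 < ρ → χ ρ p = γ * (p/ρ) + (γ - 2/3) * (p/ρ)^2 :=
  stephani_first_order_low_general c₁ c₂ γ χ hχ h0 hp
end
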